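/- Let p be a prime, let 1 ≤ j ≤ k be integers, let ψ be a primitive Dirichlet character modulo p^j, and let n be an integer. Then ∑_{v ∈ ℤ/p^kℤ} conj(ψ)(v mod p^j) · e_{p^k}(n·ṽ) = p^{k−j} · τ(conj(ψ)) · c(n), where c(n) = ψ(n / p^{k−j}) if p^{k−j} divides n and c(n) = 0 otherwise, ṽ ∈ {0,…,p^k−1} is the representative of v, and (v mod p^j) denotes the reduction of v to ℤ/p^jℤ. -/

import Mathlib

/-- e_q(x) = exp(2πi x / q). -/
noncomputable def eN (q : ℕ) (x : ℤ) : ℂ :=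
  Complex.exp (2 * Real.pi * Complex.I * x / q)

/-- The Gauss sum τ(f) = ∑_{w ∈ ℤ/qℤ} f(w)·e_q(w̃). -/
noncomputable def gaussSumE (q : ℕ) [NeZero q] (f : ZMod q → ℂ) : ℂ :=
  ∑ w : ZMod q, f w * eN q (w.val : ℤ)

open Complex AddChar DirichletCharacter

lemma eN_eq_stdAddChar (q : ℕ) [NeZero q] (x : ℤ) :
    eN q x = ZMod.stdAddChar (x : ZMod q) := by
  rw [ZMod.stdAddChar_coe]; rfl

lemma eN_mul_cancel {a : ℕ} (b : ℕ) (ha : a ≠ 0) (x : ℤ) :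
    eN (a * b) (a * x) = eN b x := by
  unfold eN
  congr 1
  have ha' : (a : ℂ) ≠ 0 := by exact_mod_cast ha
  by_cases hb : (b : ℂ) = 0
  · simp [hb]
  · field_simp
    push_cast
    ring

lemma eN_add (q : ℕ) (x y : ℤ) : eN q (x + y) = eN q x * eN q y := by
  unfold eN
  rw [← Complex.exp_add]
  congr 1
  push_cast
  ring

/-- the complete exponential sum mod m -/
lemma sum_eN_mul (m : ℕ) [NeZero m] (n : ℤ) :
    ∑ t : ZMod m, eN m (n * (t.val : ℤ)) = if (m : ℤ) ∣ n then (m : ℂ) else 0 := by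
  have h : ∀ t : ZMod m, eN m (n * (t.val : ℤ))
      = (ZMod.stdAddChar.mulShift ((n : ℤ) : ZMod m)) t := by
    intro t
    rw [eN_eq_stdAddChar, AddChar.mulShift_apply]
    congr 1
    push_cast [ZMod.natCast_val, ZMod.cast_id]
    ring
  simp only [h]
  by_cases hd : (m : ℤ) ∣ n
  · have h0 : ((n : ℤ) : ZMod m) = 0 := (ZMod.intCast_zmod_eq_zero_iff_dvd n m).mpr hd
    simp [h0, AddChar.mulShift_zero, AddChar.one_apply, Finset.card_univ, ZMod.card, hd]
  · have h0 : ((n : ℤ) : ZMod m) ≠ 0 := fun h =>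
      hd ((ZMod.intCast_zmod_eq_zero_iff_dvd n m).mp h)
    rw [if_neg hd]
    exact AddChar.sum_eq_zero_of_ne_one (ZMod.isPrimitive_stdAddChar m h0)

lemma conj_inv_apply {N : ℕ} [NeZero N] (ψ : DirichletCharacter ℂ N) (a : ZMod N) :
    (ψ.ringHomComp (starRingEnd ℂ))⁻¹ a = ψ a := by
  by_cases h : IsUnit a
  · have hz : ψ a ^ Fintype.card (ZMod N)ˣ = 1 := by
      rw [← map_pow]
      obtain ⟨u, rfl⟩ := h
      rw [← Units.val_pow_eq_pow_val, pow_card_eq_one, Units.val_one, map_one]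
    have hc : Fintype.card (ZMod N)ˣ ≠ 0 := Fintype.card_ne_zero
    have habs : ‖ψ a‖ = 1 := Complex.norm_eq_one_of_pow_eq_one hz hc
    rw [MulChar.inv_apply_eq_inv', MulChar.ringHomComp_apply, ← map_inv₀,
      Complex.inv_eq_conj habs, Complex.conj_conj]
  · rw [MulChar.map_nonunit _ h, MulChar.map_nonunit _ h]

lemma changeLevel_ringHomComp {N M : ℕ} (hd : N ∣ M) (χ : DirichletCharacter ℂ N)
    (f : ℂ →+* ℂ) :
    changeLevel hd (χ.ringHomComp f) = (changeLevel hd χ).ringHomComp f := by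
  apply MulChar.ext
  intro a
  rw [changeLevel_eq_cast_of_dvd, MulChar.ringHomComp_apply, MulChar.ringHomComp_apply,
    changeLevel_eq_cast_of_dvd]

lemma ringHomComp_conj_conj {N : ℕ} (ψ : DirichletCharacter ℂ N) :
    (ψ.ringHomComp (starRingEnd ℂ)).ringHomComp (starRingEnd ℂ) = ψ := by
  apply MulChar.ext
  intro a
  simp [MulChar.ringHomComp_apply]

lemma factorsThrough_conj_iff {N d : ℕ} (ψ : DirichletCharacter ℂ N) :
    DirichletCharacter.FactorsThrough (ψ.ringHomComp (starRingEnd ℂ)) d ↔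
      DirichletCharacter.FactorsThrough ψ d := by
  constructor
  · rintro ⟨hd, χ₀, hχ₀⟩
    exact ⟨hd, χ₀.ringHomComp (starRingEnd ℂ), by
      rw [changeLevel_ringHomComp, ← hχ₀, ringHomComp_conj_conj]⟩
  · rintro ⟨hd, χ₀, hχ₀⟩
    exact ⟨hd, χ₀.ringHomComp (starRingEnd ℂ), by
      rw [changeLevel_ringHomComp, ← hχ₀]⟩

lemma isPrimitive_conj {N : ℕ} (ψ : DirichletCharacter ℂ N) (hψ : ψ.IsPrimitive) :
    DirichletCharacter.IsPrimitive (ψ.ringHomComp (starRingEnd ℂ)) := by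
  unfold DirichletCharacter.IsPrimitive DirichletCharacter.conductor at *
  have : DirichletCharacter.conductorSet (ψ.ringHomComp (starRingEnd ℂ))
      = DirichletCharacter.conductorSet ψ := by
    ext d
    exact factorsThrough_conj_iff ψ
  rw [this]
  exact hψ

lemma sum_nonprimitive_gauss_aux (N m M : ℕ) [NeZero N] [NeZero m] [NeZero M] (hM : M = N * m)
    (hdvd : N ∣ M) (ψ : DirichletCharacter ℂ N) (hψ : ψ.IsPrimitive) (n : ℤ) :
    ∑ v : ZMod M, (starRingEnd ℂ) (ψ (ZMod.castHom hdvd (ZMod N) v)) *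
        eN M (n * (v.val : ℤ)) =
      (m : ℂ) * gaussSumE N (fun w => (starRingEnd ℂ) (ψ w)) *
        (if (m : ℤ) ∣ n then ψ (((n / (m : ℤ) : ℤ) : ZMod N)) else 0) := by
  subst hM
  have hN0 : N ≠ 0 := NeZero.ne N
  have hm0 : m ≠ 0 := NeZero.ne m
  set ι : ZMod N × ZMod m → ZMod (N * m) :=
    fun x => ((x.1.val + N * x.2.val : ℕ) : ZMod (N * m)) with hι
  have hval : ∀ (u : ZMod N) (t : ZMod m), u.val + N * t.val < N * m := by
    intro u t
    have h1 : u.val < N := u.val_lt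
    have h2 : t.val < m := t.val_lt
    calc u.val + N * t.val < N * (t.val + 1) := by nlinarith
      _ ≤ N * m := Nat.mul_le_mul_left N h2
  have hbij : Function.Bijective ι := by
    rw [Fintype.bijective_iff_injective_and_card]
    constructor
    · rintro ⟨u, t⟩ ⟨u', t'⟩ hx
      have h := congrArg ZMod.val hx
      rw [show ι (u, t) = ((u.val + N * t.val : ℕ) : ZMod (N * m)) from rfl,
        show ι (u', t') = ((u'.val + N * t'.val : ℕ) : ZMod (N * m)) from rfl,
        ZMod.val_natCast_of_lt (hval u t), ZMod.val_natCast_of_lt (hval u' t')] at h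
      have hu : u.val = u'.val := by
        have h1 := congrArg (· % N) h
        simpa [Nat.mul_mod_right, Nat.add_mul_mod_self_left, Nat.mod_eq_of_lt u.val_lt,
          Nat.mod_eq_of_lt u'.val_lt] using h1
      have ht : t.val = t'.val := by
        have h2 : N * t.val = N * t'.val := by omega
        exact Nat.eq_of_mul_eq_mul_left (Nat.pos_of_ne_zero hN0) h2
      ext
      · exact ZMod.val_injective _ hu
      · exact ZMod.val_injective _ ht
    · simp [ZMod.card]
  rw [← Function.Bijective.sum_comp hbij
    (fun v => (starRingEnd ℂ) (ψ (ZMod.castHom hdvd (ZMod N) v)) *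
      eN (N * m) (n * (v.val : ℤ)))]
  have hterm : ∀ x : ZMod N × ZMod m,
      (starRingEnd ℂ) (ψ (ZMod.castHom hdvd (ZMod N) (ι x))) *
        eN (N * m) (n * ((ι x).val : ℤ))
      = ((ψ.ringHomComp (starRingEnd ℂ)) x.1 * eN (N * m) (n * (x.1.val : ℤ))) * eN m (n * (x.2.val : ℤ)) := by
    rintro ⟨u, t⟩
    have hcast : ZMod.castHom hdvd (ZMod N) (ι (u, t)) = u := by
      rw [show ι (u, t) = ((u.val + N * t.val : ℕ) : ZMod (N * m)) from rfl, map_natCast]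
      push_cast [ZMod.natCast_self]
      simp [ZMod.natCast_val, ZMod.cast_id]
    have hv : (((ι (u, t)).val : ℕ) : ℤ) = (u.val : ℤ) + N * t.val := by
      rw [show ι (u, t) = ((u.val + N * t.val : ℕ) : ZMod (N * m)) from rfl,
        ZMod.val_natCast_of_lt (hval u t)]
      push_cast
      ring
    rw [hcast, hv]
    have h3 : n * ((u.val : ℤ) + N * t.val) = n * u.val + (N : ℤ) * (n * t.val) := by ring
    rw [h3, eN_add, eN_mul_cancel m hN0]
    simp [MulChar.ringHomComp_apply, mul_assoc]
  simp only [hterm]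
  rw [Fintype.sum_prod_type]
  simp only [← Finset.mul_sum]
  rw [← Finset.sum_mul, sum_eN_mul m n]
  by_cases hd : (m : ℤ) ∣ n
  · rw [if_pos hd, if_pos hd]
    set n' : ℤ := n / (m : ℤ) with hn'
    have hn : n = (m : ℤ) * n' := (Int.mul_ediv_cancel' hd).symm
    have hU : ∀ u : ZMod N, eN (N * m) (n * (u.val : ℤ)) =
        (ZMod.stdAddChar.mulShift ((n' : ℤ) : ZMod N)) u := by
      intro u
      have h1 : eN (N * m) (n * (u.val : ℤ)) = eN N (n' * u.val) := by
        have h2 : n * (u.val : ℤ) = (m : ℤ) * (n' * u.val) := by rw [hn]; ring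
        rw [h2, mul_comm N m, eN_mul_cancel N hm0]
      rw [h1, eN_eq_stdAddChar, AddChar.mulShift_apply]
      congr 1
      push_cast [ZMod.natCast_val, ZMod.cast_id]
      ring
    simp only [hU]
    have hG : ∑ u : ZMod N, (ψ.ringHomComp (starRingEnd ℂ)) u * (ZMod.stdAddChar.mulShift ((n' : ℤ) : ZMod N)) u
        = gaussSum (ψ.ringHomComp (starRingEnd ℂ)) (ZMod.stdAddChar.mulShift ((n' : ℤ) : ZMod N)) := rfl
    rw [hG, gaussSum_mulShift_of_isPrimitive _ (isPrimitive_conj ψ hψ)]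
    have hGE : gaussSum (ψ.ringHomComp (starRingEnd ℂ)) ZMod.stdAddChar
        = gaussSumE N (fun w => (starRingEnd ℂ) (ψ w)) := by
      unfold gaussSum gaussSumE
      apply Finset.sum_congr rfl
      intro w _
      have hw : ((w.val : ℤ) : ZMod N) = w := by
        push_cast [ZMod.natCast_val, ZMod.cast_id]
        ring
      rw [eN_eq_stdAddChar, hw, MulChar.ringHomComp_apply]
    rw [conj_inv_apply, hGE]
    ring
  · rw [if_neg hd, if_neg hd]
    ring

/-- For p prime, 1 ≤ j ≤ k, ψ primitive modulo p^j and n an integer: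
∑_{v ∈ ℤ/p^kℤ} conj(ψ)(v mod p^j)·e_{p^k}(n·ṽ) = p^(k−j)·τ(conj(ψ))·c(n), where
c(n) = ψ(n/p^(k−j)) if p^(k−j) ∣ n and c(n) = 0 otherwise. -/
theorem sum_nonprimitive_gauss (p : ℕ) [Fact p.Prime] (j k : ℕ) (hj : 1 ≤ j) (hjk : j ≤ k)
    (ψ : DirichletCharacter ℂ (p ^ j)) (hψ : ψ.IsPrimitive) (n : ℤ) :
    ∑ v : ZMod (p ^ k),
        (starRingEnd ℂ) (ψ (ZMod.castHom (pow_dvd_pow p hjk) (ZMod (p ^ j)) v)) *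
          eN (p ^ k) (n * (v.val : ℤ)) =
      (p : ℂ) ^ (k - j) * gaussSumE (p ^ j) (fun w => (starRingEnd ℂ) (ψ w)) *
        (if (p : ℤ) ^ (k - j) ∣ n then ψ (((n / (p : ℤ) ^ (k - j) : ℤ) : ZMod (p ^ j))) else 0) := by
  have hp : p ≠ 0 := (Fact.out : p.Prime).ne_zero
  haveI : NeZero (p ^ j) := ⟨pow_ne_zero _ hp⟩
  haveI : NeZero (p ^ (k - j)) := ⟨pow_ne_zero _ hp⟩
  have hNM : p ^ k = p ^ j * p ^ (k - j) := by rw [← pow_add, Nat.add_sub_cancel' hjk]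
  have h := sum_nonprimitive_gauss_aux (p ^ j) (p ^ (k - j)) (p ^ k) hNM
    (pow_dvd_pow p hjk) ψ hψ n
  rw [h]
  norm_cast
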